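/- Let Γ be a finite simplicial graph, Γ̄ obtained from Γ by adding edges, and {G_i}, {G'_i} families of groups with |G_i| = |G'_i| for all i. Then K_{Γ,Γ̄} = ker(G_Γ → G_{Γ̄}) is isomorphic to K'_{Γ,Γ̄} = ker(G'_Γ → G'_{Γ̄}). -/

import Mathlib

open Monoid
open scoped commutatorElement

namespace GPaper

variable {ι : Type*}

/-- The relator subgroup of the graph product: normal closure of commutators of
elements of vertex groups at adjacent vertices. -/
def Rels (Γ : SimpleGraph ι) (G : ι → Type*) [∀ i, Group (G i)] : Subgroup (Monoid.CoprodI G) :=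
  Subgroup.normalClosure
    { x | ∃ (i j : ι) (g : G i) (h : G j), Γ.Adj i j ∧
          x = ⁅Monoid.CoprodI.of g, Monoid.CoprodI.of h⁆ }

instance (Γ : SimpleGraph ι) (G : ι → Type*) [∀ i, Group (G i)] : (Rels Γ G).Normal :=
  Subgroup.normalClosure_normal

/-- The graph product of the groups `G i` over the simplicial graph `Γ`. -/
abbrev GP (Γ : SimpleGraph ι) (G : ι → Type*) [∀ i, Group (G i)] :=
  Monoid.CoprodI G ⧸ Rels Γ G

/-- The canonical inclusion of a vertex group into the graph product. -/
def of (Γ : SimpleGraph ι) (G : ι → Type*) [∀ i, Group (G i)] (i : ι) : G i →* GP Γ G :=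
  (QuotientGroup.mk' (Rels Γ G)).comp Monoid.CoprodI.of

/-- The canonical homomorphism from the graph product to the direct product. -/
def proj [DecidableEq ι] (Γ : SimpleGraph ι) (G : ι → Type*) [∀ i, Group (G i)] :
    GP Γ G →* (∀ i, G i) :=
  QuotientGroup.lift (Rels Γ G) (Monoid.CoprodI.lift (fun i => MonoidHom.mulSingle G i)) (by
    intro x hx
    refine Subgroup.normalClosure_le_normal ?_ hx
    rintro y ⟨i, j, g, h, hadj, rfl⟩
    have hij : i ≠ j := hadj.ne
    simp only [SetLike.mem_coe, MonoidHom.mem_ker, map_commutatorElement,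
      Monoid.CoprodI.lift_of]
    rw [commutatorElement_eq_one_iff_commute]
    exact Pi.mulSingle_commute hij g h)

/-- The canonical epimorphism `G_Γ → G_Γ'` when `Γ'` is obtained from `Γ` by adding edges. -/
def mapGraph (Γ Γ' : SimpleGraph ι) (hΓ : Γ ≤ Γ') (G : ι → Type*) [∀ i, Group (G i)] :
    GP Γ G →* GP Γ' G :=
  QuotientGroup.lift (Rels Γ G) (QuotientGroup.mk' (Rels Γ' G)) (by
    intro x hx
    rw [QuotientGroup.ker_mk']
    refine Subgroup.normalClosure_le_normal ?_ hx
    rintro y ⟨i, j, g, h, hadj, rfl⟩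
    exact Subgroup.subset_normalClosure ⟨i, j, g, h, hΓ hadj, rfl⟩)

/-- The element of the graph product represented by a word (list of syllables). -/
def wordProd (Γ : SimpleGraph ι) (G : ι → Type*) [∀ i, Group (G i)]
    (w : List (Σ i, G i)) : GP Γ G :=
  (w.map fun s => of Γ G s.1 s.2).prod

/-- The image of a word in the direct product of the vertex groups. -/
def piProd [DecidableEq ι] (G : ι → Type*) [∀ i, Group (G i)]
    (w : List (Σ i, G i)) : ∀ i, G i :=
  (w.map fun s => Pi.mulSingle s.1 s.2).prod

/-- The ordered product of those syllables of a word that belong to `G i`. -/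
def sylProd [DecidableEq ι] (G : ι → Type*) [∀ i, Group (G i)]
    (w : List (Σ i, G i)) (i : ι) : G i :=
  (w.filterMap fun s => if h : s.1 = i then some (cast (congrArg G h) s.2) else none).prod

/-- The normal (syllable) length of an element of a graph product:
the minimal number of syllables in a word representing it. -/
noncomputable def nl (Γ : SimpleGraph ι) (G : ι → Type*) [∀ i, Group (G i)]
    (g : GP Γ G) : ℕ :=
  sInf { n | ∃ w : List (Σ i, G i), wordProd Γ G w = g ∧ w.length = n }

section Phi

open scoped Classical

variable [DecidableEq ι] {G G' : ι → Type*} [∀ i, Group (G i)] [∀ i, Group (G' i)]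

/-- One step of the recursive construction of `Φ`: the new syllable
`f(π(w))⁻¹ · f(π(w)s)` (dropped if trivial), where `g = π(w)`. -/
noncomputable def phiStep (f : ∀ i, G i → G' i) (g : ∀ i, G i) (s : Σ i, G i) : List (Σ i, G' i) :=
  if (f s.1 (g s.1))⁻¹ * f s.1 (g s.1 * s.2) = 1 then []
  else [⟨s.1, (f s.1 (g s.1))⁻¹ * f s.1 (g s.1 * s.2)⟩]

/-- Auxiliary recursion: process the word left to right, carrying the
image `g` of the prefix in the direct product. -/
noncomputable def phiAux (f : ∀ i, G i → G' i) : (∀ i, G i) → List (Σ i, G i) → List (Σ i, G' i)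
  | _, [] => []
  | g, s :: w => phiStep f g s ++ phiAux f (g * Pi.mulSingle s.1 s.2) w

/-- The word map `Φ : S* → S'*` induced by the set maps `f i : G i → G' i`. -/
noncomputable def phiWord (f : ∀ i, G i → G' i) (w : List (Σ i, G i)) : List (Σ i, G' i) :=
  phiAux f 1 w

end Phi

/-!
Fix bijections `f i : G i → G' i`. Read a word in `G_Γ` from left to right, keeping track of
the image `x ∈ ∏ i, G i` of the prefix already read, and replace a syllable `a ∈ G i` by
`(f i (x i))⁻¹ * f i (x i * a) ∈ G' i`. This rule is the left component of a homomorphism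
`G_Γ → G'_Γ ≀ ∏ i, G i`: it respects the defining relations because syllables at adjacent
vertices change disjoint coordinates of `x`. On `ker (G_Γ → ∏ i, G i) ⊇ K_Γ` the state `x`
returns to its start, so the rule is multiplicative there; it commutes with adding edges, so it
carries `K_Γ` into `K'_Γ`; and the rule built from the inverse bijections undoes it, because the
states it sees are the images under `f` of the states of the first pass.
-/

section UniversalProperty

variable {Γ : SimpleGraph ι} {G : ι → Type*} [∀ i, Group (G i)] {M : Type*} [Group M]

theorem of_commute_of_adj {i j : ι} (hadj : Γ.Adj i j) (a : G i) (b : G j) :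
    Commute (of Γ G i a) (of Γ G j b) := by
  rw [← commutatorElement_eq_one_iff_commute]
  simp only [of, MonoidHom.comp_apply]
  rw [← map_commutatorElement, QuotientGroup.mk'_apply, QuotientGroup.eq_one_iff]
  exact Subgroup.subset_normalClosure ⟨i, j, a, b, hadj, rfl⟩

def lift (φ : ∀ i, G i →* M) (hφ : ∀ i j, Γ.Adj i j → ∀ a b, Commute (φ i a) (φ j b)) :
    GP Γ G →* M :=
  QuotientGroup.lift (Rels Γ G) (Monoid.CoprodI.lift φ) <| by
    refine fun x hx => Subgroup.normalClosure_le_normal ?_ hx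
    rintro _ ⟨i, j, a, b, hadj, rfl⟩
    simp [commutatorElement_eq_one_iff_commute, hφ i j hadj a b]

@[simp]
theorem lift_of (φ : ∀ i, G i →* M) (hφ : ∀ i j, Γ.Adj i j → ∀ a b, Commute (φ i a) (φ j b))
    (i : ι) (a : G i) : lift φ hφ (of Γ G i a) = φ i a := by
  simp [lift, of]

theorem hom_ext {ψ χ : GP Γ G →* M} (h : ∀ i, ψ.comp (of Γ G i) = χ.comp (of Γ G i)) :
    ψ = χ :=
  QuotientGroup.monoidHom_ext _ (Monoid.CoprodI.ext_hom _ _ h)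

@[elab_as_elim]
theorem induction_on {motive : GP Γ G → Prop} (x : GP Γ G) (one : motive 1)
    (of : ∀ i a, motive (of Γ G i a)) (mul : ∀ x y, motive x → motive y → motive (x * y)) :
    motive x := by
  induction x using QuotientGroup.induction_on with
  | H y =>
    induction y using Monoid.CoprodI.induction_on with
    | one => exact one
    | of i a => exact of i a
    | mul y z hy hz => exact mul _ _ hy hz

@[simp]
theorem mapGraph_of {Γ' : SimpleGraph ι} (hΓ : Γ ≤ Γ') (i : ι) (a : G i) :
    mapGraph Γ Γ' hΓ G (of Γ G i a) = of Γ' G i a := rfl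

@[simp]
theorem proj_of [DecidableEq ι] (i : ι) (a : G i) : proj Γ G (of Γ G i a) = Pi.mulSingle i a := by
  simp [proj, of]

end UniversalProperty

def rightTranslate (P H : Type*) [Group P] [Mul H] : P →* MulAut (P → H) where
  toFun p :=
    { toFun := fun c x => c (x * p)
      invFun := fun c x => c (x * p⁻¹)
      left_inv := fun c => by simp
      right_inv := fun c => by simp
      map_mul' := fun _ _ => rfl }
  map_one' := by ext; simp
  map_mul' p q := by ext; simp [mul_assoc]

@[simp]
theorem rightTranslate_apply {P H : Type*} [Group P] [Mul H] (p : P) (c : P → H) (x : P) :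
    rightTranslate P H p c x = c (x * p) := rfl

section Cocycle

variable [DecidableEq ι] (Γ : SimpleGraph ι) {G G' : ι → Type*} [∀ i, Group (G i)]
  [∀ i, Group (G' i)]

-- The unrestricted wreath product `GP Γ G' ≀ ∏ i, G i` for the right regular action.
abbrev Wreath (Γ : SimpleGraph ι) (G G' : ι → Type*) [∀ i, Group (G i)]
    [∀ i, Group (G' i)] :=
  ((∀ i, G i) → GP Γ G') ⋊[rightTranslate (∀ i, G i) (GP Γ G')] (∀ i, G i)

def vertexCocycle (f : ∀ i, G i → G' i) (i : ι) : G i →* Wreath Γ G G' where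
  toFun a := ⟨fun x => of Γ G' i ((f i (x i))⁻¹ * f i (x i * a)), Pi.mulSingle i a⟩
  map_one' := SemidirectProduct.ext (funext fun x => by simp) (Pi.mulSingle_one i)
  map_mul' a b := by
    refine SemidirectProduct.ext (funext fun x => ?_) (Pi.mulSingle_mul i a b)
    change of Γ G' i _ = of Γ G' i _ * of Γ G' i _
    simp [← map_mul, mul_assoc]

theorem vertexCocycle_left (f : ∀ i, G i → G' i) (i : ι) (a : G i) (x : ∀ i, G i) :
    (vertexCocycle Γ f i a).left x = of Γ G' i ((f i (x i))⁻¹ * f i (x i * a)) := rfl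

theorem vertexCocycle_right (f : ∀ i, G i → G' i) (i : ι) (a : G i) :
    (vertexCocycle Γ f i a).right = Pi.mulSingle i a := rfl

theorem vertexCocycle_commute (f : ∀ i, G i → G' i) {i j : ι} (hadj : Γ.Adj i j) (a : G i)
    (b : G j) : Commute (vertexCocycle Γ f i a) (vertexCocycle Γ f j b) := by
  refine SemidirectProduct.ext (funext fun x => ?_) (Pi.mulSingle_commute hadj.ne a b)
  simp only [SemidirectProduct.mul_left, Pi.mul_apply, rightTranslate_apply, vertexCocycle_left,
    vertexCocycle_right, Pi.mulSingle_eq_of_ne hadj.ne, Pi.mulSingle_eq_of_ne hadj.ne.symm,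
    mul_one]
  exact of_commute_of_adj hadj _ _

def cocycleHom (f : ∀ i, G i → G' i) : GP Γ G →* Wreath Γ G G' :=
  lift (vertexCocycle Γ f) fun _ _ hadj => vertexCocycle_commute Γ f hadj

def cocycle (f : ∀ i, G i → G' i) (g : GP Γ G) (x : ∀ i, G i) : GP Γ G' :=
  (cocycleHom Γ f g).left x

variable (f : ∀ i, G i → G' i)

theorem cocycleHom_right (g : GP Γ G) : (cocycleHom Γ f g).right = proj Γ G g := by
  suffices SemidirectProduct.rightHom.comp (cocycleHom Γ f) = proj Γ G from
    DFunLike.congr_fun this g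
  exact hom_ext fun i => by ext a : 1; simp [cocycleHom, vertexCocycle_right]

@[simp]
theorem cocycle_one (x : ∀ i, G i) : cocycle Γ f 1 x = 1 := by
  simp [cocycle]

@[simp]
theorem cocycle_of (i : ι) (a : G i) (x : ∀ i, G i) :
    cocycle Γ f (of Γ G i a) x = of Γ G' i ((f i (x i))⁻¹ * f i (x i * a)) := by
  rw [cocycle, cocycleHom, lift_of, vertexCocycle_left]

theorem cocycle_mul (g h : GP Γ G) (x : ∀ i, G i) :
    cocycle Γ f (g * h) x = cocycle Γ f g x * cocycle Γ f h (x * proj Γ G g) := by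
  simp only [cocycle, map_mul, SemidirectProduct.mul_left, cocycleHom_right, Pi.mul_apply,
    rightTranslate_apply]

theorem proj_cocycle (g : GP Γ G) (x : ∀ i, G i) :
    proj Γ G' (cocycle Γ f g x) = (Pi.map f x)⁻¹ * Pi.map f (x * proj Γ G g) := by
  induction g using induction_on generalizing x with
  | one => simp
  | of i a =>
    ext j
    rcases eq_or_ne j i with rfl | hji
    · simp
    · simp [Pi.mulSingle_eq_of_ne hji]
  | mul g h ihg ihh => simp [cocycle_mul, ihg, ihh, mul_assoc]

theorem cocycle_cocycle {f' : ∀ i, G' i → G i} (hf : ∀ i, Function.LeftInverse (f' i) (f i))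
    (g : GP Γ G) (x : ∀ i, G i) : cocycle Γ f' (cocycle Γ f g x) (Pi.map f x) = g := by
  induction g using induction_on generalizing x with
  | one => simp
  | of i a =>
    rw [cocycle_of, cocycle_of, Pi.map_apply, mul_inv_cancel_left, hf i, hf i, inv_mul_cancel_left]
  | mul g h ihg ihh => simp [cocycle_mul, proj_cocycle, ihg, ihh]

end Cocycle

section Kernel

variable [DecidableEq ι] {Γ Γ' : SimpleGraph ι} (hΓ : Γ ≤ Γ') {G G' : ι → Type*}
  [∀ i, Group (G i)] [∀ i, Group (G' i)]

@[simp]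
theorem proj_mapGraph (g : GP Γ G) : proj Γ' G (mapGraph Γ Γ' hΓ G g) = proj Γ G g := by
  rw [← MonoidHom.comp_apply]
  congr 1
  exact hom_ext fun i => by ext a : 1; simp

theorem mapGraph_cocycle (f : ∀ i, G i → G' i) (g : GP Γ G) (x : ∀ i, G i) :
    mapGraph Γ Γ' hΓ G' (cocycle Γ f g x) = cocycle Γ' f (mapGraph Γ Γ' hΓ G g) x := by
  induction g using induction_on generalizing x with
  | one => simp
  | of i a => simp
  | mul g h ihg ihh => simp [cocycle_mul, ihg, ihh]

theorem proj_eq_one_of_mem_ker {g : GP Γ G} (hg : g ∈ (mapGraph Γ Γ' hΓ G).ker) :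
    proj Γ G g = 1 := by
  rw [← proj_mapGraph hΓ, hg, map_one]

def kerHom (f : ∀ i, G i → G' i) (x : ∀ i, G i) :
    (mapGraph Γ Γ' hΓ G).ker →* (mapGraph Γ Γ' hΓ G').ker where
  toFun k := ⟨cocycle Γ f k x, by rw [MonoidHom.mem_ker, mapGraph_cocycle, k.2, cocycle_one]⟩
  map_one' := Subtype.ext (cocycle_one Γ f x)
  map_mul' k l := Subtype.ext <| by
    simp [cocycle_mul, proj_eq_one_of_mem_ker hΓ k.2]

theorem kerHom_kerHom {f : ∀ i, G i → G' i} {f' : ∀ i, G' i → G i}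
    (hf : ∀ i, Function.LeftInverse (f' i) (f i)) {x : ∀ i, G i} {y : ∀ i, G' i}
    (hxy : Pi.map f x = y) (k : (mapGraph Γ Γ' hΓ G).ker) :
    kerHom hΓ f' y (kerHom hΓ f x k) = k :=
  Subtype.ext (hxy ▸ cocycle_cocycle Γ f hf k x)

def kerEquiv (e : ∀ i, G i ≃ G' i) (x : ∀ i, G i) :
    (mapGraph Γ Γ' hΓ G).ker ≃* (mapGraph Γ Γ' hΓ G').ker :=
  (kerHom hΓ (fun i => e i) x).toMulEquiv (kerHom hΓ (fun i => (e i).symm) (Pi.map (fun i => e i) x))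
    (MonoidHom.ext (kerHom_kerHom hΓ (fun i => (e i).leftInverse_symm) rfl))
    (MonoidHom.ext (kerHom_kerHom hΓ (fun i => (e i).rightInverse_symm) (by ext; simp)))

end Kernel

theorem stmt18_general {ι : Type*} [DecidableEq ι] (Γ Γ' : SimpleGraph ι)
    (hΓ : Γ ≤ Γ') (G G' : ι → Type*) [∀ i, Group (G i)] [∀ i, Group (G' i)]
    (hcard : ∀ i, Nonempty (G i ≃ G' i)) :
    Nonempty ((mapGraph Γ Γ' hΓ G).ker ≃* (mapGraph Γ Γ' hΓ G').ker) :=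
  ⟨kerEquiv hΓ (fun i => (hcard i).some) 1⟩

/-- If `Γ̄` is obtained from `Γ` by adding edges and the vertex groups
of two families have the same cardinalities, then the kernels
`K_{Γ,Γ̄} = ker(G_Γ → G_{Γ̄})` and `K'_{Γ,Γ̄} = ker(G'_Γ → G'_{Γ̄})` are isomorphic. -/
theorem stmt18 {ι : Type*} [DecidableEq ι] [Fintype ι] (Γ Γ' : SimpleGraph ι)
    (hΓ : Γ ≤ Γ') (G G' : ι → Type*) [∀ i, Group (G i)] [∀ i, Group (G' i)]
    (hcard : ∀ i, Nonempty (G i ≃ G' i)) :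
    Nonempty ((mapGraph Γ Γ' hΓ G).ker ≃* (mapGraph Γ Γ' hΓ G').ker) :=
  stmt18_general Γ Γ' hΓ G G' hcard

end GPaper
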